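/- arXiv:2108.09233 — 2 statements merged into one kernel-verified Lean document; each statement's English description precedes it below -/
import Mathlib

section
/- (Improvement step for DT-DOI.) Let (θ, ψ, y) be feasible for the Detour-DOI LP with ψ_l > 0 for some l, and suppose there exists a column l* ∈ Ω satisfying: a_{u l*} = 1 for all u in the set N⁰ of items with tight constraint y_{ul} = ψ_l; a_{u l*} = 0 whenever y_{ul} = 0; c_{l*} ≤ c_l + Σ_{u: a_{u l*}=1} c_{ul}; and D_{d l*} = D_{dl} for all d in the set D⁰ of demands with tight capacity constraint. Then there exists α > 0 such that the modified solution ψ_l ← ψ_l − α, θ_{l*} ← θ_{l*} + α, y_{ul} ← y_{ul} − a_{u l*} α remains feasible and its objective does not exceed the original objective. -/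
open Finset

variable {N Ω : Type*} [Fintype N] [Fintype Ω]

/-- Feasibility for the set-cover master LP for CVRP. -/
def MasterFeas (a : N → Ω → ℝ) (K : ℝ) (θ : Ω → ℝ) : Prop :=
  (∀ l, 0 ≤ θ l) ∧ (∀ u, 1 ≤ ∑ l, a u l * θ l) ∧ (∑ l, θ l) ≤ K

/-- Feasibility for the Detour-DOI LP.  Here `D_{dl} = Σ_u [d ≤ d_u] a_{ul}`. -/
def DTFeas (a : N → Ω → ℝ) (du : N → ℕ) (Dset : Finset ℕ) (K : ℝ)
    (θ ψ : Ω → ℝ) (y : N → Ω → ℝ) : Prop :=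
  (∀ l, 0 ≤ θ l) ∧ (∀ l, 0 ≤ ψ l) ∧ (∀ u l, 0 ≤ y u l) ∧
  (∀ u, 1 ≤ (∑ l, y u l) + ∑ l, a u l * θ l) ∧
  (∀ u l, y u l ≤ ψ l) ∧
  (∀ l, ∀ d ∈ Dset,
    (∑ u, if d ≤ du u then y u l else 0) ≤ (∑ u, if d ≤ du u then a u l else 0) * ψ l) ∧
  (∑ l, θ l) + (∑ l, ψ l) ≤ K

/-- Objective of the Detour-DOI LP. -/
def DTObj (c : Ω → ℝ) (cul : N → Ω → ℝ) (θ ψ : Ω → ℝ) (y : N → Ω → ℝ) : ℝ :=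
  (∑ l, c l * θ l) + (∑ l, c l * ψ l) + ∑ u, ∑ l, cul u l * y u l

lemma wsum_update [DecidableEq Ω] (w f : Ω → ℝ) (x : Ω) (v : ℝ) :
    ∑ l, w l * Function.update f x v l = (∑ l, w l * f l) + w x * (v - f x) := by
  have h : ∀ l, w l * Function.update f x v l
      = w l * f l + (if l = x then w x * (v - f x) else 0) := by
    intro l
    rcases eq_or_ne l x with rfl | h
    · simp only [Function.update_self, if_true, if_pos trivial]; ring
    · simp [Function.update_of_ne h, h]
  rw [Finset.sum_congr rfl fun l _ => h l, Finset.sum_add_distrib,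
    Finset.sum_ite_eq' Finset.univ x]
  simp

lemma sum_update1 [DecidableEq Ω] (f : Ω → ℝ) (x : Ω) (v : ℝ) :
    ∑ l, Function.update f x v l = (∑ l, f l) + (v - f x) := by
  simpa using wsum_update (fun _ => (1:ℝ)) f x v

/-- Improvement step for DT-DOI: if `(θ, ψ, y)` is feasible, `ψ_l > 0`, and a
column `l*` exists satisfying the four structural conditions, then for some
step size `α > 0` the modified solution `ψ_l ← ψ_l − α`, `θ_{l*} ← θ_{l*} + α`,
`y_{ul} ← y_{ul} − a_{u l*} α` remains feasible with no larger objective. -/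
theorem stmt7 [DecidableEq Ω] (c : Ω → ℝ) (cul : N → Ω → ℝ) (a : N → Ω → ℝ)
    (du : N → ℕ) (Dset : Finset ℕ) (K : ℝ)
    (hc : ∀ l, 0 ≤ c l) (hcul : ∀ u l, 0 ≤ cul u l)
    (ha : ∀ u l, a u l = 0 ∨ a u l = 1) (hdu : ∀ u, 0 < du u)
    (θ ψ : Ω → ℝ) (y : N → Ω → ℝ)
    (hfeas : DTFeas a du Dset K θ ψ y)
    (l : Ω) (hψl : 0 < ψ l) (lstar : Ω)
    (h1 : ∀ u, y u l = ψ l → a u lstar = 1)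
    (h2 : ∀ u, y u l = 0 → a u lstar = 0)
    (h3 : c lstar ≤ c l + ∑ u, a u lstar * cul u l)
    (h4 : ∀ d ∈ Dset,
      (∑ u, if d ≤ du u then y u l else 0) = (∑ u, if d ≤ du u then a u l else 0) * ψ l →
      (∑ u, if d ≤ du u then a u lstar else 0) = (∑ u, if d ≤ du u then a u l else 0)) :
    ∃ α > (0 : ℝ),
      DTFeas a du Dset K (Function.update θ lstar (θ lstar + α))
        (Function.update ψ l (ψ l - α))
        (fun u => Function.update (y u) l (y u l - a u lstar * α)) ∧
      DTObj c cul (Function.update θ lstar (θ lstar + α))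
        (Function.update ψ l (ψ l - α))
        (fun u => Function.update (y u) l (y u l - a u lstar * α)) ≤
        DTObj c cul θ ψ y := by
  classical
  obtain ⟨hθ0, hψ0, hy0, hcov, hyψ, hcap, hbud⟩ := hfeas
  -- bounds from the individual constraints
  set ub : N → ℝ := fun u => if a u lstar = 1 then y u l else ψ l - y u l with hub
  set cb : ℕ → ℝ := fun d =>
    if 0 < ((∑ u, if d ≤ du u then a u l else 0) - (∑ u, if d ≤ du u then a u lstar else 0))
        ∧ 0 < ((∑ u, if d ≤ du u then a u l else 0) * ψ l - (∑ u, if d ≤ du u then y u l else 0))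
    then ((∑ u, if d ≤ du u then a u l else 0) * ψ l - (∑ u, if d ≤ du u then y u l else 0))
        / ((∑ u, if d ≤ du u then a u l else 0) - (∑ u, if d ≤ du u then a u lstar else 0))
    else ψ l with hcb
  set S : Finset ℝ := insert (ψ l) (Finset.univ.image ub ∪ Dset.image cb) with hS
  have hne : S.Nonempty := ⟨ψ l, Finset.mem_insert_self _ _⟩
  set α := S.min' hne with hαdef
  have hub_pos : ∀ u, 0 < ub u := by
    intro u
    by_cases h : a u lstar = 1
    · simp only [hub, if_pos h]
      rcases eq_or_lt_of_le (hy0 u l) with h0 | h0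
      · exact absurd (h2 u h0.symm) (by rw [h]; norm_num)
      · exact h0
    · simp only [hub, if_neg h]
      have hne' : y u l ≠ ψ l := fun he => h (h1 u he)
      exact sub_pos.mpr (lt_of_le_of_ne (hyψ u l) hne')
  have hcb_pos : ∀ d, 0 < cb d := by
    intro d
    by_cases h : 0 < ((∑ u, if d ≤ du u then a u l else 0) - (∑ u, if d ≤ du u then a u lstar else 0))
        ∧ 0 < ((∑ u, if d ≤ du u then a u l else 0) * ψ l - (∑ u, if d ≤ du u then y u l else 0))
    · simp only [hcb, if_pos h]; exact div_pos h.2 h.1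
    · simp only [hcb, if_neg h]; exact hψl
  have hα : 0 < α := by
    rw [hαdef]
    apply (Finset.lt_min'_iff S hne).mpr
    intro x hx
    simp only [hS, Finset.mem_insert, Finset.mem_union, Finset.mem_image] at hx
    rcases hx with rfl | ⟨u, _, rfl⟩ | ⟨d, _, rfl⟩
    · exact hψl
    · exact hub_pos u
    · exact hcb_pos d
  have hαψ : α ≤ ψ l := Finset.min'_le _ _ (Finset.mem_insert_self _ _)
  have hαub : ∀ u, α ≤ ub u := fun u => Finset.min'_le _ _ (by
    simp only [hS, Finset.mem_insert, Finset.mem_union, Finset.mem_image]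
    exact Or.inr (Or.inl ⟨u, Finset.mem_univ u, rfl⟩))
  have hαcb : ∀ d ∈ Dset, α ≤ cb d := fun d hd => Finset.min'_le _ _ (by
    simp only [hS, Finset.mem_insert, Finset.mem_union, Finset.mem_image]
    exact Or.inr (Or.inr ⟨d, hd, rfl⟩))
  -- key capacity inequality
  have key : ∀ d ∈ Dset,
      α * ((∑ u, if d ≤ du u then a u l else 0) - (∑ u, if d ≤ du u then a u lstar else 0))
        ≤ (∑ u, if d ≤ du u then a u l else 0) * ψ l - (∑ u, if d ≤ du u then y u l else 0) := by
    intro d hd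
    have hcapd := hcap l d hd
    have h4d := h4 d hd
    have hcbd := hαcb d hd
    simp only [hcb] at hcbd
    set Sl := (∑ u, if d ≤ du u then a u l else 0) with hSl
    set Ss := (∑ u, if d ≤ du u then a u lstar else 0) with hSs
    set Yl := (∑ u, if d ≤ du u then y u l else 0) with hYl
    have hg : 0 ≤ Sl * ψ l - Yl := by linarith
    by_cases hΔd : 0 < Sl - Ss
    · have hgpos : 0 < Sl * ψ l - Yl := by
        rcases eq_or_lt_of_le hg with h0 | h0
        · exfalso
          have hti : Yl = Sl * ψ l := by linarith
          have := h4d hti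
          rw [this] at hΔd
          linarith
        · exact h0
      rw [if_pos ⟨hΔd, hgpos⟩] at hcbd
      calc α * (Sl - Ss) ≤ ((Sl * ψ l - Yl) / (Sl - Ss)) * (Sl - Ss) := by
            exact mul_le_mul_of_nonneg_right hcbd hΔd.le
        _ = Sl * ψ l - Yl := div_mul_cancel₀ _ (ne_of_gt hΔd)
    · push_neg at hΔd
      have : α * (Sl - Ss) ≤ 0 := mul_nonpos_of_nonneg_of_nonpos hα.le (by linarith)
      linarith
  refine ⟨α, hα, ⟨?_, ?_, ?_, ?_, ?_, ?_, ?_⟩, ?_⟩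
  · -- θ' ≥ 0
    intro l'
    rcases eq_or_ne l' lstar with rfl | h
    · simp only [Function.update_self]; exact add_nonneg (hθ0 _) hα.le
    · simp only [Function.update_of_ne h]; exact hθ0 l'
  · -- ψ' ≥ 0
    intro l'
    rcases eq_or_ne l' l with rfl | h
    · simp only [Function.update_self]; linarith
    · simp only [Function.update_of_ne h]; exact hψ0 l'
  · -- y' ≥ 0
    intro u l'
    simp only [Function.update_apply]
    split_ifs with h
    · rcases ha u lstar with h0 | h1
      · rw [h0]; simpa using hy0 u l
      · have := hαub u
        simp only [hub, if_pos h1] at this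
        rw [h1]; linarith
    · exact hy0 u l'
  · -- cover
    intro u
    simp only []
    rw [sum_update1, wsum_update]
    have e1 : (y u l - a u lstar * α) - y u l = -(a u lstar * α) := by ring
    have e2 : a u lstar * ((θ lstar + α) - θ lstar) = a u lstar * α := by ring
    rw [e1, e2]
    have := hcov u
    linarith
  · -- y' ≤ ψ'
    intro u l'
    simp only [Function.update_apply]
    split_ifs with h
    · rcases ha u lstar with h0 | h1
      · have := hαub u
        have hne1 : a u lstar ≠ 1 := by rw [h0]; norm_num
        simp only [hub, if_neg hne1] at this
        rw [h0]; linarith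
      · rw [h1]; have := hyψ u l; linarith
    · exact hyψ u l'
  · -- capacity
    intro l' d hd
    rcases eq_or_ne l' l with rfl | h
    · simp only [Function.update_self]
      have hL : ∑ u, (if d ≤ du u then y u l' - a u lstar * α else 0)
          = (∑ u, if d ≤ du u then y u l' else 0)
            - (∑ u, if d ≤ du u then a u lstar else 0) * α := by
        rw [Finset.sum_congr rfl (fun u _ => show
            (if d ≤ du u then y u l' - a u lstar * α else 0)
            = (if d ≤ du u then y u l' else 0) - (if d ≤ du u then a u lstar else 0) * α by
          split_ifs <;> ring), Finset.sum_sub_distrib, ← Finset.sum_mul]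
      rw [hL]
      have := key d hd
      nlinarith [this]
    · simp only [Function.update_of_ne h]
      exact hcap l' d hd
  · -- budget
    rw [sum_update1, sum_update1]
    linarith
  · -- objective
    simp only [DTObj]
    rw [wsum_update, wsum_update]
    have hy' : ∀ u, ∑ l', cul u l' * Function.update (y u) l (y u l - a u lstar * α) l'
        = (∑ l', cul u l' * y u l') - cul u l * (a u lstar * α) := by
      intro u
      rw [wsum_update]; ring
    simp only [hy']
    rw [Finset.sum_sub_distrib]
    have hB : ∑ u, cul u l * (a u lstar * α) = (∑ u, a u lstar * cul u l) * α := by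
      rw [Finset.sum_mul]
      exact Finset.sum_congr rfl fun u _ => by ring
    rw [hB]
    have := mul_le_mul_of_nonneg_right h3 hα.le
    nlinarith [this]
end

section
/- (Detour insertion bound.) In a metric space, let l be a route covering item set N_l with cost c_l, and for u ∉ N_l define c_{ul} = 2·min_{v ∈ N_l ∪ {depot}} c(u,v). Then for any subset N̂ ⊆ N_l ∪ M where M is a set of items not on l, there exists a route covering exactly N̂ of cost at most c_l + Σ_{u ∈ N̂ ∩ M} c_{ul}. -/
/-!
Each new item `u ∈ N̂ ∩ M` is inserted into the route right after its nearest point `v` (the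
depot included); since `dist u w ≤ dist u v + dist v w` for the next stop `w`, this costs at most
`2 · dist u v = c_{ul}`. Items of `N_l` outside `N̂` are then shortcut, which by the triangle
inequality again never increases the cost.
-/

open Finset

/-- Length of a route given as a finite sequence of points: sum of distances
between consecutive points. -/
def tourLength {X : Type*} [MetricSpace X] : List X → ℝ
  | [] => 0
  | [_] => 0
  | x :: y :: rest => dist x y + tourLength (y :: rest)

section Routes

variable {X : Type*} [MetricSpace X]

@[simp]
lemma tourLength_cons_cons (x y : X) (s : List X) :
    tourLength (x :: y :: s) = dist x y + tourLength (y :: s) := rfl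

lemma tourLength_cons_le_dist_add (u x : X) :
    ∀ s : List X, tourLength (u :: s) ≤ dist u x + tourLength (x :: s)
  | [] => by simp [tourLength]
  | a :: s => by
    simp only [tourLength_cons_cons]
    linarith [dist_triangle u x a]

lemma tourLength_cons_le_of_sublist {s t : List X} (h : s.Sublist t) (x : X) :
    tourLength (x :: s) ≤ tourLength (x :: t) := by
  induction h generalizing x with
  | slnil => rfl
  | cons a _ ih => exact (ih x).trans (tourLength_cons_le_dist_add x a _)
  | cons_cons a _ ih =>
    simp only [tourLength_cons_cons]
    linarith [ih a]

lemma tourLength_detour_le (u v : X) (s : List X) :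
    tourLength (v :: u :: s) ≤ tourLength (v :: s) + 2 * dist u v := by
  rw [tourLength_cons_cons, dist_comm]
  linarith [tourLength_cons_le_dist_add u v s]

lemma exists_perm_tourLength_le_add_detour (u z : X) {v : X} :
    ∀ {x : X} {t : List X}, v ∈ x :: t → ∃ t' : List X, t'.Perm (u :: t) ∧
      tourLength (x :: t' ++ [z]) ≤ tourLength (x :: t ++ [z]) + 2 * dist u v
  | _, t, .head _ => ⟨u :: t, .refl _, by simpa using tourLength_detour_le u v (t ++ [z])⟩
  | x, a :: t, .tail _ hv => by
    obtain ⟨t', hperm, hlen⟩ := exists_perm_tourLength_le_add_detour u z hv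
    refine ⟨a :: t', (hperm.cons a).trans (.swap u a t), ?_⟩
    simp only [List.cons_append, tourLength_cons_cons] at hlen ⊢
    linarith

lemma exists_perm_tourLength_le_add_detours (x0 : X) (l : List X) (anchor : X → X) :
    ∀ us : List X, (∀ u ∈ us, anchor u ∈ x0 :: l) → ∃ L : List X, L.Perm (us ++ l) ∧
      tourLength (x0 :: L ++ [x0]) ≤
        tourLength (x0 :: l ++ [x0]) + (us.map fun u => 2 * dist u (anchor u)).sum
  | [], _ => ⟨l, .refl _, by simp⟩
  | u :: us, hanchor => by
    obtain ⟨L, hperm, hlen⟩ := exists_perm_tourLength_le_add_detours x0 l anchor us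
      fun w hw => hanchor w (List.mem_cons_of_mem u hw)
    have hroute : x0 :: l ⊆ x0 :: L :=
      List.cons_subset_cons x0 fun a ha => hperm.mem_iff.mpr (List.mem_append_right us ha)
    obtain ⟨L', hperm', hlen'⟩ :=
      exists_perm_tourLength_le_add_detour u x0 (hroute (hanchor u List.mem_cons_self))
    refine ⟨L', hperm'.trans (hperm.cons u), ?_⟩
    simp only [List.map_cons, List.sum_cons]
    linarith

end Routes

/-- Detour insertion bound: given a route `l` (from the depot `x0` back to
`x0`) covering item set `N_l`, a set `M` of items not on `l`, and the detour
costs `c_{ul} = 2·min_{v ∈ N_l ∪ {depot}} c(u,v)`, for any `N̂ ⊆ N_l ∪ M`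
there exists a route covering exactly `N̂` of cost at most
`c_l + Σ_{u ∈ N̂ ∩ M} c_{ul}`. -/
theorem stmt14 {X : Type*} [MetricSpace X] [DecidableEq X] (x0 : X)
    (l : List X) (hnd : l.Nodup) (M : Finset X)
    (hdisj : ∀ u ∈ M, u ∉ l.toFinset)
    (cul : X → ℝ)
    (hcul : ∀ u, cul u = 2 * (insert x0 l.toFinset).inf'
      (Finset.insert_nonempty _ _) (fun v => dist u v))
    (Nhat : Finset X) (hsub : Nhat ⊆ l.toFinset ∪ M) :
    ∃ l' : List X, l'.Nodup ∧ l'.toFinset = Nhat ∧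
      tourLength (x0 :: l' ++ [x0]) ≤
        tourLength (x0 :: l ++ [x0]) + ∑ u ∈ Nhat ∩ M, cul u := by
  choose anchor hanchor_mem hanchor_dist using fun u =>
    exists_mem_eq_inf' (insert_nonempty x0 l.toFinset) (fun v => dist u v)
  obtain ⟨L, hperm, hlen⟩ :=
    exists_perm_tourLength_le_add_detours x0 l anchor (Nhat ∩ M).toList
      fun u _ => by simpa using hanchor_mem u
  have hsum : ((Nhat ∩ M).toList.map fun u => 2 * dist u (anchor u)).sum =
      ∑ u ∈ Nhat ∩ M, cul u := by
    simp [hcul, hanchor_dist]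
  have hL_nodup : L.Nodup := hperm.nodup_iff.mpr <| List.nodup_append.mpr
    ⟨nodup_toList _, hnd, fun a ha b hb hab => hdisj a (mem_inter.mp (mem_toList.mp ha)).2
      (List.mem_toFinset.mpr (hab ▸ hb))⟩
  refine ⟨L.filter (· ∈ Nhat), hL_nodup.filter _, ?_, ?_⟩
  · ext x
    have hx := @hsub x
    simp only [List.mem_toFinset, List.mem_filter, hperm.mem_iff, List.mem_append, mem_toList,
      mem_inter, decide_eq_true_eq, mem_union] at hx ⊢
    tauto
  · rw [← hsum]
    exact (tourLength_cons_le_of_sublist (L.filter_sublist.append_right [x0]) x0).trans hlen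
end
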